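/- arXiv:2410.23859 — 2 statements merged into one kernel-verified Lean document; each statement's English description precedes it below -/
import Mathlib

section
/- Let c > 1 and let f, g : [1,∞) → [0,∞) be bounded measurable functions such that (a) f(r) ≤ 1/2 for all r ∈ [1, 10c] and g(r) ≤ 1/4 for all r ≥ 1, and (b) f(r) ≤ f(r/(10c))² + g(r) for all r ≥ 10c. If lim_{r→∞} g(r) = 0, then lim_{r→∞} f(r) = 0. -/
open Set Filter

/-- Gouéré's recursion lemma: if g → 0 then f → 0. -/
theorem stmt6 (c : ℝ) (hc : 1 < c) (f g : ℝ → ℝ)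
    (hfm : Measurable f) (hgm : Measurable g)
    (hfb : ∃ M, ∀ r ≥ (1:ℝ), f r ≤ M) (hgb : ∃ M, ∀ r ≥ (1:ℝ), g r ≤ M)
    (hf0 : ∀ r ≥ (1:ℝ), 0 ≤ f r) (hg0 : ∀ r ≥ (1:ℝ), 0 ≤ g r)
    (ha1 : ∀ r ∈ Set.Icc (1:ℝ) (10 * c), f r ≤ 1 / 2)
    (ha2 : ∀ r ≥ (1:ℝ), g r ≤ 1 / 4)
    (hb : ∀ r ≥ 10 * c, f r ≤ f (r / (10 * c)) ^ 2 + g r)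
    (hg : Tendsto g atTop (nhds 0)) :
    Tendsto f atTop (nhds 0) := by
  have h10c : (1:ℝ) < 10 * c := by nlinarith
  have h10c0 : (0:ℝ) < 10 * c := by linarith
  -- Step 1: f ≤ 1/2 on [1, ∞)
  have hhalf : ∀ r ≥ (1:ℝ), f r ≤ 1/2 := by
    have key : ∀ n : ℕ, ∀ r : ℝ, 1 ≤ r → r ≤ (10*c)^(n+1) → f r ≤ 1/2 := by
      intro n
      induction n with
      | zero =>
        intro r h1 h2
        exact ha1 r ⟨h1, by simpa using h2⟩
      | succ n ih =>
        intro r h1 h2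
        by_cases hr : r ≤ 10*c
        · exact ha1 r ⟨h1, hr⟩
        · push_neg at hr
          have hr' : 10*c ≤ r := le_of_lt hr
          have hq1 : 1 ≤ r / (10*c) := (le_div_iff₀ h10c0).2 (by linarith)
          have hq2 : r / (10*c) ≤ (10*c)^(n+1) := by
            rw [div_le_iff₀ h10c0]
            calc r ≤ (10*c)^(n+1+1) := h2
              _ = (10*c)^(n+1) * (10*c) := by ring
          have hbr := hb r hr'
          have h2f := ih _ hq1 hq2
          have hgr := ha2 r (by linarith)
          nlinarith [hf0 _ hq1]
    intro r hr
    obtain ⟨n, hn⟩ := pow_unbounded_of_one_lt r h10c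
    have hmono : (10*c)^n ≤ (10*c)^(n+1) :=
      pow_le_pow_right₀ (le_of_lt h10c) (Nat.le_succ n)
    exact key n r hr (le_trans (le_of_lt hn) hmono)
  -- Step 2: main recursion bound
  have key2 : ∀ ε : ℝ, 0 < ε → ∀ R ≥ (1:ℝ), (∀ r ≥ R, g r ≤ ε) →
      ∀ n : ℕ, ∀ r ≥ R * (10*c)^n, f r ≤ (1/2)^(n+1) + 2*ε := by
    intro ε hε R hR hgR n
    induction n with
    | zero =>
      intro r hr
      simp only [pow_zero, mul_one] at hr
      have h1r : (1:ℝ) ≤ r := le_trans hR hr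
      have := hhalf r h1r
      norm_num
      linarith
    | succ n ih =>
      intro r hr
      have hpow : (1:ℝ) ≤ (10*c)^n := one_le_pow₀ (le_of_lt h10c)
      have hpow' : (1:ℝ) ≤ (10*c)^(n+1) := one_le_pow₀ (le_of_lt h10c)
      have hrR : R ≤ r := by nlinarith
      have hself : 10*c ≤ (10*c)^(n+1) := le_self_pow₀ (le_of_lt h10c) (by omega)
      have hr10 : 10*c ≤ r := by nlinarith
      have hq : R * (10*c)^n ≤ r / (10*c) := by
        rw [le_div_iff₀ h10c0]
        calc R * (10*c)^n * (10*c) = R * (10*c)^(n+1) := by ring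
          _ ≤ r := hr
      have h1q : (1:ℝ) ≤ r / (10*c) := by nlinarith
      have hf1 := ih _ hq
      have hf2 := hhalf _ h1q
      have hgr := hgR r hrR
      have hbr := hb r hr10
      have hsq : f (r / (10*c)) ^ 2 ≤ (1/2) * ((1/2)^(n+1) + 2*ε) := by
        nlinarith [hf0 _ h1q]
      rw [pow_succ]
      nlinarith
  -- Step 3: conclude
  rw [Metric.tendsto_atTop]
  intro δ hδ
  have hε : (0:ℝ) < δ/8 := by linarith
  obtain ⟨R₀, hR₀⟩ := (Metric.tendsto_atTop.1 hg) (δ/8) hε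
  set R := max R₀ 1 with hRdef
  have hR1 : (1:ℝ) ≤ R := le_max_right _ _
  have hgR : ∀ r ≥ R, g r ≤ δ/8 := by
    intro r hr
    have := hR₀ r (le_trans (le_max_left _ _) hr)
    rw [Real.dist_eq, sub_zero] at this
    exact le_of_lt (lt_of_abs_lt this)
  obtain ⟨n, hn⟩ := exists_pow_lt_of_lt_one (by linarith : (0:ℝ) < δ/2)
    (by norm_num : (1/2 : ℝ) < 1)
  refine ⟨R * (10*c)^n, fun r hr => ?_⟩
  have hpow : (1:ℝ) ≤ (10*c)^n := one_le_pow₀ (le_of_lt h10c)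
  have h1r : (1:ℝ) ≤ r := by nlinarith
  have hfr := key2 (δ/8) hε R hR1 hgR n r hr
  have hmono : ((1:ℝ)/2)^(n+1) ≤ (1/2)^n :=
    pow_le_pow_of_le_one (by norm_num) (by norm_num) (Nat.le_succ n)
  rw [Real.dist_eq, sub_zero, abs_of_nonneg (hf0 r h1r)]
  linarith
end

section
/- Let c > 1, θ > 0, and let f, g : [1,∞) → [0,∞) be bounded measurable functions such that f(r) ≤ 1/2 for r ∈ [1, 10c], g(r) ≤ 1/4 for all r, and f(r) ≤ f(r/(10c))² + g(r) for all r ≥ 10c. If ∫_1^∞ r^{θ−1} g(r) dr < ∞, then ∫_1^∞ r^{θ−1} f(r) dr < ∞. -/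
/-!
Write `K = 10c`. Iterating `f r ≤ f (r / K) ^ 2 + g r` down to `[1, K]`, where `f ≤ 1/2`, shows
for `K ^ n ≤ r < K ^ (n + 1)` that `f r ≤ 2 ^ (-2 ^ n) + ∑_{j < n} w_j g (r / K ^ j)` with
`w_j = 2 ^ (j + 1) 2 ^ (-2 ^ j)`: since `g ≤ 1/4 = 1/2 - (1/2) ^ 2`, all iterates stay below
`1/2`, and the value of `g` at scale `r / K ^ j` is squared `j` more times on the way up to `r`,
so its weight is doubly exponentially small. Absorbing `2 ^ (-2 ^ n) ≤ w_n` into the indicator of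
`[1, K)` at `r / K ^ n`, `r ^ (θ - 1) f r` is dominated by
`∑_j w_j r ^ (θ - 1) G (r / K ^ j)` with `G = g + 1_[1, K)`. The substitution `r = K ^ j s` turns the integral of the `j`-th term into
`w_j K ^ (j θ) ∫_1^∞ s ^ (θ - 1) G s ds`, and `∑_j w_j K ^ (j θ) < ∞`.
-/

open Set Filter MeasureTheory

theorem summable_pow_mul_half_pow_two_pow {Q : ℝ} (hQ : 0 ≤ Q) :
    Summable fun n : ℕ => Q ^ n * (1 / 2 : ℝ) ^ 2 ^ n := by
  have hlim : Tendsto (fun n : ℕ => Q * (1 / 2 : ℝ) ^ 2 ^ n) atTop (nhds 0) := by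
    simpa using ((tendsto_pow_atTop_nhds_zero_of_lt_one (r := (1 / 2 : ℝ)) (by norm_num)
      (by norm_num)).comp (tendsto_pow_atTop_atTop_of_one_lt one_lt_two)).const_mul Q
  refine summable_of_ratio_norm_eventually_le (r := 1 / 2) (by norm_num) ?_
  filter_upwards [hlim.eventually (eventually_le_nhds (by norm_num : (0 : ℝ) < 1 / 2))] with n hn
  have hsucc : Q ^ (n + 1) * (1 / 2 : ℝ) ^ 2 ^ (n + 1)
      = Q * (1 / 2 : ℝ) ^ 2 ^ n * (Q ^ n * (1 / 2 : ℝ) ^ 2 ^ n) := by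
    rw [pow_succ 2 n, pow_mul]; ring
  rw [Real.norm_of_nonneg (by positivity), Real.norm_of_nonneg (by positivity), hsucc]
  exact mul_le_mul_of_nonneg_right hn (by positivity)

lemma pow_two_pow_succ (x : ℝ) (k : ℕ) : x ^ 2 ^ (k + 1) = (x ^ 2 ^ k) ^ 2 := by
  rw [pow_succ, pow_mul]

lemma quarter_pow_two_pow (k : ℕ) : (1 / 4 : ℝ) ^ 2 ^ k = (1 / 2) ^ 2 ^ (k + 1) := by
  rw [show (1 / 4 : ℝ) = (1 / 2) ^ 2 by norm_num, ← pow_mul, pow_succ, mul_comm]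

/-- `sqIterBound h m 0` majorizes `m` steps of `x ↦ x ^ 2 + h j` (with `h 0` applied last)
started from `1/2`, and `sqIterBound h m k` majorizes its `2 ^ k`-th power. Each `h j` enters
through `(h j + 1/4) ^ 2 ^ (j + k) - (1/4) ^ 2 ^ (j + k)`, its excess over the extremal case
`h j = 1/4`; in this form squaring only moves the majorant from `k` to `k + 1`
(`sqIterBound_sq_le`). -/
noncomputable def sqIterBound (h : ℕ → ℝ) (m k : ℕ) : ℝ :=
  (1 / 2) ^ 2 ^ (m + k) +
    ∑ j ∈ Finset.range m, ((h j + 1 / 4) ^ 2 ^ (j + k) - (1 / 4) ^ 2 ^ (j + k))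

noncomputable def sqIterWeight (j : ℕ) : ℝ := 2 ^ (j + 1) * (1 / 2) ^ 2 ^ j

lemma sqIterWeight_nonneg (j : ℕ) : 0 ≤ sqIterWeight j := by
  unfold sqIterWeight; positivity

section SqIterBound

variable {h : ℕ → ℝ} {m : ℕ}

@[simp]
lemma sqIterBound_zero (h : ℕ → ℝ) (k : ℕ) : sqIterBound h 0 k = (1 / 2) ^ 2 ^ k := by
  simp [sqIterBound]

lemma sqIterBound_succ (h : ℕ → ℝ) (m k : ℕ) :
    sqIterBound h (m + 1) k = ((h 0 + 1 / 4) ^ 2 ^ k - (1 / 4) ^ 2 ^ k)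
      + sqIterBound (fun j => h (j + 1)) m (k + 1) := by
  simp only [sqIterBound, Finset.sum_range_succ', zero_add, add_assoc, add_comm 1 k]
  ring

lemma sqIterBound_le (hh : ∀ j < m, h j ∈ Icc 0 (1 / 4)) (k : ℕ) :
    sqIterBound h m k ≤ (1 / 2) ^ 2 ^ k := by
  induction m generalizing h k with
  | zero => simp
  | succ m ih =>
    have h0 := hh 0 m.succ_pos
    have hhead : (h 0 + 1 / 4) ^ 2 ^ k ≤ (1 / 2 : ℝ) ^ 2 ^ k :=
      pow_le_pow_left₀ (by linarith [h0.1]) (by linarith [h0.2]) _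
    have htail := ih (fun j hj => hh (j + 1) (by omega)) (k + 1)
    rw [sqIterBound_succ, quarter_pow_two_pow]
    linarith

lemma sqIterBound_sq_le (hh : ∀ j < m, h j ∈ Icc 0 (1 / 4)) (k : ℕ) :
    sqIterBound h m k ^ 2 ≤ sqIterBound h m (k + 1) := by
  induction m generalizing h k with
  | zero => simp [pow_two_pow_succ]
  | succ m ih =>
    have hh' : ∀ j < m, h (j + 1) ∈ Icc 0 (1 / 4) := fun j hj => hh (j + 1) (by omega)
    have htail_sq := ih hh' (k + 1)
    have htail_le : sqIterBound (fun j => h (j + 1)) m (k + 1) ≤ (1 / 4) ^ 2 ^ k :=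
      (sqIterBound_le hh' (k + 1)).trans_eq (quarter_pow_two_pow k).symm
    have hquarter : (1 / 4 : ℝ) ^ 2 ^ k ≤ (h 0 + 1 / 4) ^ 2 ^ k :=
      pow_le_pow_left₀ (by norm_num) (by linarith [(hh 0 m.succ_pos).1]) _
    rw [sqIterBound_succ, sqIterBound_succ, pow_two_pow_succ, pow_two_pow_succ]
    -- `(u - v + χ) ^ 2 ≤ u ^ 2 - v ^ 2 + χ ^ 2` as soon as `χ ≤ v ≤ u`
    nlinarith [mul_nonneg (sub_nonneg.2 hquarter) (sub_nonneg.2 htail_le)]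

lemma sqIterBound_le_sum (hh : ∀ j < m, h j ∈ Icc 0 (1 / 4)) :
    sqIterBound h m 0 ≤ (1 / 2) ^ 2 ^ m + ∑ j ∈ Finset.range m, sqIterWeight j * h j := by
  simp only [sqIterBound, add_zero]
  gcongr with j hj
  obtain ⟨h0, h4⟩ := hh j (Finset.mem_range.1 hj)
  have hhalf : (1 / 2 : ℝ) ^ 2 ^ j = (1 / 2) ^ (2 ^ j - 1) * (1 / 2) := by
    rw [← pow_succ, Nat.sub_add_cancel Nat.one_le_two_pow]
  have hmax : max |h j + 1 / 4| |(1 / 4 : ℝ)| ≤ 1 / 2 := by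
    rw [abs_of_nonneg (by linarith), abs_of_nonneg (by norm_num)]
    exact max_le (by linarith) (by norm_num)
  calc (h j + 1 / 4) ^ 2 ^ j - (1 / 4) ^ 2 ^ j
      ≤ |h j + 1 / 4 - 1 / 4| * (2 ^ j : ℕ) * max |h j + 1 / 4| |1 / 4| ^ (2 ^ j - 1) :=
        (le_abs_self _).trans (abs_pow_sub_pow_le _ _ _)
    _ ≤ h j * 2 ^ j * (1 / 2) ^ (2 ^ j - 1) := by
        rw [add_sub_cancel_right, abs_of_nonneg h0]; push_cast; gcongr
    _ = sqIterWeight j * h j := by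
        unfold sqIterWeight; rw [hhalf, pow_succ 2 j]; ring

end SqIterBound

lemma summable_sqIterWeight_mul_pow {Q : ℝ} (hQ : 0 ≤ Q) :
    Summable fun j => sqIterWeight j * Q ^ j := by
  refine ((summable_pow_mul_half_pow_two_pow (mul_nonneg zero_le_two hQ)).mul_left 2).congr
    fun j => ?_
  unfold sqIterWeight; rw [pow_succ, mul_pow]; ring

lemma tsum_ofReal_sqIterWeight_mul_rpow_ne_top {K : ℝ} (hK : 0 ≤ K) (θ : ℝ) :
    ∑' j, ENNReal.ofReal (sqIterWeight j) * ENNReal.ofReal ((K ^ j) ^ θ) ≠ ⊤ := by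
  have hterm : ∀ j, ENNReal.ofReal (sqIterWeight j) * ENNReal.ofReal ((K ^ j) ^ θ) =
      ENNReal.ofReal (sqIterWeight j * (K ^ θ) ^ j) := fun j => by
    rw [Real.rpow_pow_comm hK, ENNReal.ofReal_mul (sqIterWeight_nonneg j)]
  rw [tsum_congr hterm, ← ENNReal.ofReal_tsum_of_nonneg
    (fun j => mul_nonneg (sqIterWeight_nonneg j) (by positivity))
    (summable_sqIterWeight_mul_pow (by positivity))]
  exact ENNReal.ofReal_ne_top

structure SquareRecursion (K : ℝ) (f g : ℝ → ℝ) : Prop where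
  f_nonneg : ∀ r ≥ 1, 0 ≤ f r
  g_nonneg : ∀ r ≥ 1, 0 ≤ g r
  g_le : ∀ r ≥ 1, g r ≤ 1 / 4
  f_le_of_mem_Icc : ∀ r ∈ Icc 1 K, f r ≤ 1 / 2
  le_sq_add : ∀ r ≥ K, f r ≤ f (r / K) ^ 2 + g r

lemma one_le_div_pow {K r : ℝ} (hK : 1 ≤ K) {n j : ℕ} (hj : j ≤ n) (hr : K ^ n ≤ r) :
    1 ≤ r / K ^ j := by
  rw [one_le_div (by positivity)]
  exact (pow_le_pow_right₀ hK hj).trans hr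

namespace SquareRecursion

variable {K : ℝ} {f g : ℝ → ℝ}

lemma g_mem_Icc (hfg : SquareRecursion K f g) {r : ℝ} (hr : 1 ≤ r) : g r ∈ Icc 0 (1 / 4) :=
  ⟨hfg.g_nonneg r hr, hfg.g_le r hr⟩

theorem le_sqIterBound (hfg : SquareRecursion K f g) (hK : 1 < K) (n : ℕ) {r : ℝ}
    (hlo : K ^ n ≤ r) (hhi : r < K ^ (n + 1)) :
    f r ≤ sqIterBound (fun j => g (r / K ^ j)) n 0 := by
  induction n generalizing r with
  | zero => simpa using hfg.f_le_of_mem_Icc r ⟨by simpa using hlo, by simpa using hhi.le⟩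
  | succ n ih =>
    have hK0 : 0 < K := by linarith
    have hprev := ih (r := r / K) (by rwa [le_div_iff₀ hK0, ← pow_succ])
      (by rwa [div_lt_iff₀ hK0, ← pow_succ])
    simp only [div_div, ← pow_succ'] at hprev
    have hsq := sqIterBound_sq_le (fun j (hj : j < n) =>
      hfg.g_mem_Icc (one_le_div_pow hK.le (show j + 1 ≤ n + 1 by omega) hlo)) 0
    have hfK := hfg.f_nonneg (r / K)
      (by simpa using one_le_div_pow hK.le (show 1 ≤ n + 1 by omega) hlo)
    have hKr : K ≤ r := by
      simpa using (pow_le_pow_right₀ hK.le (show 1 ≤ n + 1 by omega)).trans hlo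
    rw [sqIterBound_succ]
    simp only [pow_zero, pow_one, div_one, add_sub_cancel_right]
    calc f r ≤ f (r / K) ^ 2 + g r := hfg.le_sq_add r hKr
      _ ≤ sqIterBound (fun j => g (r / K ^ (j + 1))) n 0 ^ 2 + g r := by gcongr
      _ ≤ _ := by rw [add_comm]; gcongr

theorem le_sum_sqIterWeight_mul (hfg : SquareRecursion K f g) (hK : 1 < K) (n : ℕ) {r : ℝ}
    (hlo : K ^ n ≤ r) (hhi : r < K ^ (n + 1)) :
    f r ≤ ∑ j ∈ Finset.range (n + 1),
      sqIterWeight j * (g (r / K ^ j) + (Ico 1 K).indicator 1 (r / K ^ j)) := by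
  have hg : ∀ j ≤ n, g (r / K ^ j) ∈ Icc 0 (1 / 4) := fun j hj =>
    hfg.g_mem_Icc (one_le_div_pow hK.le hj hlo)
  have hbottom : r / K ^ n ∈ Ico 1 K := by
    have hK0 : 0 < K ^ n := by positivity
    exact ⟨(one_le_div hK0).2 hlo, by rwa [div_lt_iff₀ hK0, ← pow_succ']⟩
  refine (hfg.le_sqIterBound hK n hlo hhi).trans
    ((sqIterBound_le_sum fun j hj => hg j hj.le).trans ?_)
  rw [Finset.sum_range_succ, add_comm]
  refine add_le_add (Finset.sum_le_sum fun j _ => mul_le_mul_of_nonneg_left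
    (le_add_of_nonneg_right (indicator_nonneg (fun _ _ => zero_le_one) _))
    (sqIterWeight_nonneg j)) ?_
  rw [indicator_of_mem hbottom, Pi.one_apply]
  calc (1 / 2 : ℝ) ^ 2 ^ n ≤ sqIterWeight n * 1 := by
        rw [mul_one, sqIterWeight]
        exact le_mul_of_one_le_left (by positivity) (one_le_pow₀ one_le_two)
    _ ≤ _ := mul_le_mul_of_nonneg_left (by linarith [(hg n le_rfl).1]) (sqIterWeight_nonneg n)

theorem ofReal_rpow_mul_le_tsum_indicator (hfg : SquareRecursion K f g) (hK : 1 < K) (θ : ℝ)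
    {r : ℝ} (hr : 1 ≤ r) :
    ENNReal.ofReal (r ^ (θ - 1) * f r) ≤ ∑' j, (Ici (K ^ j)).indicator (fun r =>
      ENNReal.ofReal (sqIterWeight j) *
        ENNReal.ofReal (r ^ (θ - 1) * (g (r / K ^ j) + (Ico 1 K).indicator 1 (r / K ^ j)))) r := by
  obtain ⟨n, hlo, hhi⟩ := exists_nat_pow_near hr hK
  have hw : 0 ≤ r ^ (θ - 1) := by positivity
  have hterm : ∀ j ∈ Finset.range (n + 1),
      0 ≤ r ^ (θ - 1) * (g (r / K ^ j) + (Ico 1 K).indicator 1 (r / K ^ j)) := fun j hj =>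
    mul_nonneg hw (add_nonneg (hfg.g_nonneg _ (one_le_div_pow hK.le
      (Nat.lt_succ_iff.1 (Finset.mem_range.1 hj)) hlo))
      (indicator_nonneg (fun _ _ => zero_le_one) _))
  calc ENNReal.ofReal (r ^ (θ - 1) * f r)
      ≤ ENNReal.ofReal (∑ j ∈ Finset.range (n + 1), sqIterWeight j *
          (r ^ (θ - 1) * (g (r / K ^ j) + (Ico 1 K).indicator 1 (r / K ^ j)))) := by
        refine ENNReal.ofReal_le_ofReal ?_
        simp only [mul_left_comm _ (r ^ (θ - 1)), ← Finset.mul_sum]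
        exact mul_le_mul_of_nonneg_left (hfg.le_sum_sqIterWeight_mul hK n hlo hhi) hw
    _ = ∑ j ∈ Finset.range (n + 1), (Ici (K ^ j)).indicator (fun r =>
          ENNReal.ofReal (sqIterWeight j) * ENNReal.ofReal
            (r ^ (θ - 1) * (g (r / K ^ j) + (Ico 1 K).indicator 1 (r / K ^ j)))) r := by
        rw [ENNReal.ofReal_sum_of_nonneg fun j hj => mul_nonneg (sqIterWeight_nonneg j)
          (hterm j hj)]
        refine Finset.sum_congr rfl fun j hj => ?_
        rw [indicator_of_mem (show r ∈ Ici (K ^ j) from (pow_le_pow_right₀ hK.le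
          (Nat.lt_succ_iff.1 (Finset.mem_range.1 hj))).trans hlo),
          ENNReal.ofReal_mul (sqIterWeight_nonneg j)]
    _ ≤ _ := ENNReal.sum_le_tsum _

end SquareRecursion

lemma setLIntegral_Ici_rpow_mul_comp_div {a : ℝ} (ha : 0 < a) (θ : ℝ) (G : ℝ → ℝ) :
    ∫⁻ r in Ici a, ENNReal.ofReal (r ^ (θ - 1) * G (r / a)) =
      ENNReal.ofReal (a ^ θ) * ∫⁻ s in Ici 1, ENNReal.ofReal (s ^ (θ - 1) * G s) := by
  have himage : (a * ·) '' Ici 1 = Ici a := by rw [image_mul_left_Ici ha, mul_one]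
  rw [← himage, lintegral_image_eq_lintegral_abs_deriv_mul measurableSet_Ici
    (fun x _ => by simpa using ((hasDerivAt_id x).const_mul a).hasDerivWithinAt)
    (mul_right_injective₀ ha.ne').injOn, ← lintegral_const_mul' _ _ ENNReal.ofReal_ne_top]
  refine setLIntegral_congr_fun measurableSet_Ici fun s (hs : 1 ≤ s) => ?_
  rw [abs_of_pos ha, mul_div_cancel_left₀ _ ha.ne', Real.mul_rpow ha.le (by linarith),
    Real.rpow_sub_one ha.ne', ← ENNReal.ofReal_mul ha.le, ← ENNReal.ofReal_mul (by positivity)]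
  congr 1
  field_simp

theorem lintegral_tsum_indicator_rpow_mul_comp_div {a : ℕ → ℝ} (ha : ∀ j, 0 < a j)
    (d : ℕ → ENNReal) (θ : ℝ) {G : ℝ → ℝ} (hG : Measurable G) :
    ∫⁻ r, ∑' j, (Ici (a j)).indicator
        (fun r => d j * ENNReal.ofReal (r ^ (θ - 1) * G (r / a j))) r =
      (∑' j, d j * ENNReal.ofReal (a j ^ θ)) *
        ∫⁻ s in Ici 1, ENNReal.ofReal (s ^ (θ - 1) * G s) := by
  have hmeas : ∀ j, Measurable fun r => ENNReal.ofReal (r ^ (θ - 1) * G (r / a j)) := fun j =>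
    ((measurable_id.pow_const _).mul (hG.comp (measurable_id.div_const _))).ennreal_ofReal
  rw [lintegral_tsum fun j => ((hmeas j).const_mul _).aemeasurable.indicator measurableSet_Ici,
    ← ENNReal.tsum_mul_right]
  refine tsum_congr fun j => ?_
  rw [lintegral_indicator measurableSet_Ici, lintegral_const_mul _ (hmeas j),
    setLIntegral_Ici_rpow_mul_comp_div (ha j), mul_assoc]

lemma setLIntegral_Ici_rpow_mul_add_indicator_ne_top {K θ : ℝ} {g : ℝ → ℝ}
    (hg : Measurable g)
    (hgint : ∫⁻ s in Ici 1, ENNReal.ofReal (s ^ (θ - 1) * g s) ≠ ⊤) :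
    ∫⁻ s in Ici 1, ENNReal.ofReal (s ^ (θ - 1) * (g s + (Ico 1 K).indicator 1 s)) ≠ ⊤ := by
  have hle : ∀ s ∈ Ici (1 : ℝ),
      ENNReal.ofReal (s ^ (θ - 1) * (g s + (Ico 1 K).indicator 1 s)) ≤
        ENNReal.ofReal (s ^ (θ - 1) * g s) +
          (Icc 1 K).indicator (fun s => ENNReal.ofReal (s ^ (θ - 1))) s := by
    intro s _
    rw [mul_add]
    refine ENNReal.ofReal_add_le.trans (add_le_add le_rfl ?_)
    by_cases hs : s ∈ Ico 1 K
    · simp [indicator_of_mem hs, indicator_of_mem (Ico_subset_Icc_self hs)]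
    · simp [indicator_of_notMem hs]
  have hcont : ContinuousOn (fun s : ℝ => s ^ (θ - 1)) (Icc 1 K) :=
    continuousOn_id.rpow_const fun s hs => Or.inl (zero_lt_one.trans_le hs.1).ne'
  have hmeas : Measurable fun s : ℝ => ENNReal.ofReal (s ^ (θ - 1) * g s) :=
    ((measurable_id.pow_const _).mul hg).ennreal_ofReal
  refine ne_top_of_le_ne_top ?_ (setLIntegral_mono' measurableSet_Ici hle)
  rw [lintegral_add_left hmeas]
  refine ENNReal.add_ne_top.2 ⟨hgint, ne_top_of_le_ne_top
    (hcont.integrableOn_Icc (μ := volume)).setLIntegral_lt_top.ne ?_⟩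
  exact (setLIntegral_le_lintegral _ _).trans_eq (lintegral_indicator measurableSet_Icc _)

theorem stmt7_general (c θ : ℝ) (hc : 1 < c) (f g : ℝ → ℝ)
    (hgm : Measurable g)
    (hf0 : ∀ r ≥ (1:ℝ), 0 ≤ f r) (hg0 : ∀ r ≥ (1:ℝ), 0 ≤ g r)
    (ha1 : ∀ r ∈ Set.Icc (1:ℝ) (10 * c), f r ≤ 1 / 2)
    (ha2 : ∀ r ≥ (1:ℝ), g r ≤ 1 / 4)
    (hb : ∀ r ≥ 10 * c, f r ≤ f (r / (10 * c)) ^ 2 + g r)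
    (hgint : ∫⁻ r in Set.Ioi (1:ℝ), ENNReal.ofReal (r ^ (θ - 1) * g r) ≠ ⊤) :
    ∫⁻ r in Set.Ioi (1:ℝ), ENNReal.ofReal (r ^ (θ - 1) * f r) ≠ ⊤ := by
  have hK : 1 < 10 * c := by linarith
  have hfg : SquareRecursion (10 * c) f g := ⟨hf0, hg0, ha2, ha1, hb⟩
  have hGint := setLIntegral_Ici_rpow_mul_add_indicator_ne_top (K := 10 * c) hgm
    (by rwa [← setLIntegral_congr Ioi_ae_eq_Ici])
  refine ne_top_of_le_ne_top ?_ ((setLIntegral_mono' measurableSet_Ioi fun r hr =>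
    hfg.ofReal_rpow_mul_le_tsum_indicator hK θ hr.le).trans (setLIntegral_le_lintegral _ _))
  rw [lintegral_tsum_indicator_rpow_mul_comp_div (a := fun j => (10 * c) ^ j)
    (G := fun s => g s + (Ico 1 (10 * c)).indicator 1 s) (fun j => pow_pos (by linarith) j) _ θ
    (hgm.add (measurable_const.indicator measurableSet_Ico))]
  exact ENNReal.mul_ne_top (tsum_ofReal_sqIterWeight_mul_rpow_ne_top (by linarith) θ) hGint

/-- Gouéré's recursion lemma, integral version:
if ∫_1^∞ r^{θ−1} g(r) dr < ∞ then ∫_1^∞ r^{θ−1} f(r) dr < ∞. -/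
theorem stmt7 (c θ : ℝ) (hc : 1 < c) (hθ : 0 < θ) (f g : ℝ → ℝ)
    (hfm : Measurable f) (hgm : Measurable g)
    (hfb : ∃ M, ∀ r ≥ (1:ℝ), f r ≤ M) (hgb : ∃ M, ∀ r ≥ (1:ℝ), g r ≤ M)
    (hf0 : ∀ r ≥ (1:ℝ), 0 ≤ f r) (hg0 : ∀ r ≥ (1:ℝ), 0 ≤ g r)
    (ha1 : ∀ r ∈ Set.Icc (1:ℝ) (10 * c), f r ≤ 1 / 2)
    (ha2 : ∀ r ≥ (1:ℝ), g r ≤ 1 / 4)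
    (hb : ∀ r ≥ 10 * c, f r ≤ f (r / (10 * c)) ^ 2 + g r)
    (hgint : ∫⁻ r in Set.Ioi (1:ℝ), ENNReal.ofReal (r ^ (θ - 1) * g r) ≠ ⊤) :
    ∫⁻ r in Set.Ioi (1:ℝ), ENNReal.ofReal (r ^ (θ - 1) * f r) ≠ ⊤ :=
  stmt7_general c θ hc f g hgm hf0 hg0 ha1 ha2 hb hgint
end
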